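/- arXiv:1111.1132 — 2 statements merged into one kernel-verified Lean document; each statement's English description precedes it below -/
import Mathlib

section
/- lim_{s→1} ( (1/(2·2^s)) · √π · Γ(s−1/2)/Γ(s) · (2^{2s}−2)/(2^{2s}−1) · ζ(2s−1)/ζ(2s) − 1/(2π(s−1)) ) = (1/π)·( ζ'(−1)/ζ(−1) − log(4π) + 1 + (1/6)·log 2 ), where Γ is the Gamma function and ζ the Riemann zeta function. -/
/-!
The expression is `G s · ζ(2s - 1) - G 1 / (2(s - 1))`, where `G = scatteringCoeff` is
holomorphic at `1` with `G 1 = 1 / π`. Since `ζ u = 1 / (u - 1) + γ + o(1)` as `u → 1`, its limit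
is `G 1 · γ + G' 1 / 2`, and `G' 1` follows from `Γ'(1/2) = -√π (γ + 2 log 2)`, `Γ'(1) = -γ` and
`ζ(2) = π² / 6`. Differentiating the functional equation `ζ(1 - s) = 2 (2π)^(-s) Γ(s) cos(πs/2) ζ(s)`
at `s = 2` expresses `ζ'(-1)` through `ζ'(2)`, which turns the limit into the stated form.
-/

open Complex Filter
open scoped Real Topology

local notation "γ" => Real.eulerMascheroniConstant

theorem tendsto_mul_riemannZeta_sub_div {G : ℂ → ℂ} {G' : ℂ} (hG : HasDerivAt G G' 1) :
    Tendsto (fun s ↦ G s * riemannZeta s - G 1 / (s - 1)) (𝓝[≠] 1) (𝓝 (G 1 * γ + G')) := by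
  have hlim := ((hG.continuousAt.tendsto.mono_left nhdsWithin_le_nhds).mul
    tendsto_riemannZeta_sub_one_div).add (hasDerivAt_iff_tendsto_slope.mp hG)
  -- `G s * ζ s - G 1 / (s - 1) = G s * (ζ s - 1 / (s - 1)) + slope G 1 s`
  refine hlim.congr' (eventually_nhdsWithin_of_forall fun s hs ↦ ?_)
  have : s - 1 ≠ 0 := sub_ne_zero.mpr hs
  rw [slope_def_field]
  field_simp
  ring

theorem tendsto_mul_riemannZeta_two_mul_sub_one_sub_div {G : ℂ → ℂ} {G' : ℂ}
    (hG : HasDerivAt G G' 1) :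
    Tendsto (fun s ↦ G s * riemannZeta (2 * s - 1) - G 1 / (2 * (s - 1))) (𝓝[≠] 1)
      (𝓝 (G 1 * γ + G' / 2)) := by
  have hH : HasDerivAt (fun u ↦ G ((u + 1) / 2)) (G' / 2) 1 := by
    have hG' : HasDerivAt G G' ((1 + 1) / 2) := by norm_num [hG]
    simpa [Function.comp_def, div_eq_mul_inv] using
      hG'.comp (1 : ℂ) (((hasDerivAt_id' (1 : ℂ)).add_const 1).div_const 2)
  have hmap : Tendsto (fun s : ℂ ↦ 2 * s - 1) (𝓝[≠] 1) (𝓝[≠] 1) := by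
    have hc : ContinuousWithinAt (fun s : ℂ ↦ 2 * s - 1) {1}ᶜ 1 := by fun_prop
    have hmaps : Set.MapsTo (fun s : ℂ ↦ 2 * s - 1) {1}ᶜ {1}ᶜ := fun s hs h ↦
      hs <| Set.mem_singleton_iff.mpr <| by linear_combination Set.mem_singleton_iff.mp h / 2
    have h := hc.tendsto_nhdsWithin hmaps
    norm_num at h
    exact h
  convert (tendsto_mul_riemannZeta_sub_div hH).comp hmap using 2 with s
  · simp only [Function.comp_apply]
    ring_nf
  · norm_num

theorem riemannZeta_neg_one : riemannZeta (-1) = -1 / 12 := by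
  have h := riemannZeta_neg_nat_eq_bernoulli 1
  norm_num [bernoulli_two] at h
  rw [h]
  norm_num

theorem riemannZeta_one_sub_eventuallyEq_of_one_lt_re {s₀ : ℂ} (hs₀ : 1 < s₀.re) :
    (fun s ↦ riemannZeta (1 - s)) =ᶠ[𝓝 s₀]
      fun s ↦ 2 * (2 * π) ^ (-s) * Gamma s * cos (π * s / 2) * riemannZeta s := by
  filter_upwards [(isOpen_lt continuous_const continuous_re).mem_nhds hs₀] with s (hs : 1 < s.re)
  refine riemannZeta_one_sub (fun n h ↦ ?_) (fun h ↦ ?_)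
  · have := congrArg re h
    simp only [neg_re, natCast_re] at this
    linarith [n.cast_nonneg (α := ℝ)]
  · simp [h] at hs

theorem deriv_riemannZeta_neg_one :
    deriv riemannZeta (-1) =
      (1 - γ - (Real.log (2 * π) : ℂ)) / 12 + deriv riemannZeta 2 / (2 * π ^ 2) := by
  have hlhs : HasDerivAt (fun s ↦ riemannZeta (1 - s)) (-deriv riemannZeta (-1)) 2 := by
    have hζ : HasDerivAt riemannZeta (deriv riemannZeta (-1)) (1 - 2) := by
      norm_num [(differentiableAt_riemannZeta (by norm_num : (-1 : ℂ) ≠ 1)).hasDerivAt]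
    exact hζ.comp_const_sub 1 2
  have hpow : HasDerivAt (fun s : ℂ ↦ 2 * (2 * π : ℂ) ^ (-s))
      (2 * ((2 * π : ℂ) ^ (-2 : ℂ) * log (2 * π) * -1)) 2 :=
    ((hasDerivAt_neg (2 : ℂ)).const_cpow (Or.inl (by simp [Real.pi_ne_zero]))).const_mul 2
  have hΓ : HasDerivAt Gamma (1 - γ) 2 := by
    simpa [neg_add_eq_sub, one_add_one_eq_two] using hasDerivAt_Gamma_nat 1
  have hcos : HasDerivAt (fun s : ℂ ↦ cos (π * s / 2)) (-sin (π * 2 / 2) * (π / 2)) 2 := by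
    simpa using (((hasDerivAt_id (2 : ℂ)).const_mul (π : ℂ)).div_const 2).ccos
  have hζ : HasDerivAt riemannZeta (deriv riemannZeta 2) 2 :=
    (differentiableAt_riemannZeta (by norm_num)).hasDerivAt
  have hrhs := (((hpow.fun_mul hΓ).fun_mul hcos).fun_mul hζ).congr_of_eventuallyEq
    (riemannZeta_one_sub_eventuallyEq_of_one_lt_re (by norm_num : 1 < (2 : ℂ).re))
  have hlog : log (2 * π) = (Real.log (2 * π) : ℂ) := by
    rw [ofReal_log (by positivity)]
    push_cast
    rfl
  have hsin : sin (π * 2 / 2) = 0 := by simp [← ofReal_sin]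
  have hcos2 : cos (π * 2 / 2) = -1 := by simp [← ofReal_cos]
  have key := hlhs.unique hrhs
  simp only [Gamma_ofNat_eq_factorial, Nat.factorial_one, Nat.cast_one, hsin, hcos2,
    riemannZeta_two, hlog, cpow_neg, cpow_ofNat] at key
  field_simp at key ⊢
  linear_combination -key

theorem Gamma_one_half_eq_sqrt_pi : Gamma (1 / 2) = (√π : ℂ) := by
  rw [← Real.Gamma_one_half_eq, ← Gamma_ofReal]
  push_cast
  rfl

theorem hasDerivAt_Gamma_sub_one_half_div_Gamma :
    HasDerivAt (fun s ↦ Gamma (s - 1 / 2) / Gamma s) (-2 * √π * log 2) 1 := by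
  have hhalf : HasDerivAt Gamma (-√π * (γ + 2 * log 2)) (1 - 1 / 2) := by
    rw [show (1 : ℂ) - 1 / 2 = 1 / 2 by norm_num]
    exact hasDerivAt_Gamma_one_half
  refine ((hhalf.comp_sub_const 1 (1 / 2)).fun_div hasDerivAt_Gamma_one (by simp)).congr_deriv ?_
  norm_num [Gamma_one_half_eq_sqrt_pi]
  ring

theorem hasDerivAt_two_cpow_two_mul_sub_two_div :
    HasDerivAt (fun s : ℂ ↦ (2 ^ (2 * s) - 2) / (2 ^ (2 * s) - 1)) (8 * log 2 / 9) 1 := by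
  have hpow : HasDerivAt (fun s : ℂ ↦ (2 : ℂ) ^ (2 * s)) (2 ^ (2 * 1 : ℂ) * log 2 * 2) 1 := by
    simpa using ((hasDerivAt_id' (1 : ℂ)).const_mul 2).const_cpow (Or.inl two_ne_zero)
  have h4 : (2 : ℂ) ^ (2 * 1 : ℂ) = 4 := by norm_num
  refine ((hpow.sub_const 2).fun_div (hpow.sub_const 1) (by norm_num [h4])).congr_deriv ?_
  rw [h4]
  ring

theorem hasDerivAt_one_div_two_mul_two_cpow :
    HasDerivAt (fun s : ℂ ↦ 1 / (2 * 2 ^ s)) (-log 2 / 4) 1 := by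
  refine ((hasDerivAt_const (1 : ℂ) 1).fun_div (((hasDerivAt_id' (1 : ℂ)).const_cpow
    (Or.inl two_ne_zero)).const_mul 2) (by simp)).congr_deriv ?_
  simp
  ring

theorem hasDerivAt_riemannZeta_two_mul {s : ℂ} (hs : 2 * s ≠ 1) :
    HasDerivAt (fun s ↦ riemannZeta (2 * s)) (2 * deriv riemannZeta (2 * s)) s := by
  simpa [Function.comp_def, mul_comm] using
    (differentiableAt_riemannZeta hs).hasDerivAt.comp s ((hasDerivAt_id' s).const_mul 2)

noncomputable def scatteringCoeff (s : ℂ) : ℂ :=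
  1 / (2 * 2 ^ s) * (√π : ℂ) * (Gamma (s - 1 / 2) / Gamma s) *
    ((2 ^ (2 * s) - 2) / (2 ^ (2 * s) - 1)) / riemannZeta (2 * s)

theorem scatteringCoeff_one : scatteringCoeff 1 = 1 / π := by
  have hsqrt : (√π : ℂ) ^ 2 = π := by exact_mod_cast Real.sq_sqrt Real.pi_pos.le
  norm_num [scatteringCoeff, Gamma_one_half_eq_sqrt_pi, riemannZeta_two]
  field_simp
  rw [hsqrt]
  ring

theorem hasDerivAt_scatteringCoeff :
    HasDerivAt scatteringCoeff (-(5 * log 2 / 3 + 12 * deriv riemannZeta 2 / π ^ 2) / π) 1 := by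
  have hsqrt : (√π : ℂ) ^ 2 = π := by exact_mod_cast Real.sq_sqrt Real.pi_pos.le
  have hζ := hasDerivAt_riemannZeta_two_mul (s := 1) (by norm_num)
  have h := (((hasDerivAt_one_div_two_mul_two_cpow.mul_const (√π : ℂ)).fun_mul
    hasDerivAt_Gamma_sub_one_half_div_Gamma).fun_mul
    hasDerivAt_two_cpow_two_mul_sub_two_div).fun_div hζ (by simp [riemannZeta_two, Real.pi_ne_zero])
  refine h.congr_deriv ?_
  norm_num [Gamma_one_half_eq_sqrt_pi, riemannZeta_two]
  field_simp
  rw [hsqrt]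
  ring

/-- **Off-diagonal scattering constant of Γ(2).**
`lim_{s→1} ( (1/(2·2^s))·√π·Γ(s−1/2)/Γ(s) · (2^{2s}−2)/(2^{2s}−1) · ζ(2s−1)/ζ(2s)
  − 1/(2π(s−1)) ) = (1/π)·( ζ'(−1)/ζ(−1) − log(4π) + 1 + (1/6)·log 2 )`. -/
theorem gamma_two_scattering_offdiag :
    Tendsto (fun s : ℂ =>
        (1 / (2 * (2 : ℂ) ^ s)) * (Real.sqrt Real.pi : ℂ) *
          (Complex.Gamma (s - 1 / 2) / Complex.Gamma s) *
          (((2 : ℂ) ^ (2 * s) - 2) / ((2 : ℂ) ^ (2 * s) - 1)) *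
          (riemannZeta (2 * s - 1) / riemannZeta (2 * s)) -
        1 / (2 * (Real.pi : ℂ) * (s - 1)))
      (nhdsWithin 1 {(1 : ℂ)}ᶜ)
      (nhds ((1 / (Real.pi : ℂ)) *
        (deriv riemannZeta (-1) / riemannZeta (-1) - (Real.log (4 * Real.pi) : ℂ) + 1 +
          (1 / 6) * (Real.log 2 : ℂ)))) := by
  have h := tendsto_mul_riemannZeta_two_mul_sub_one_sub_div hasDerivAt_scatteringCoeff
  rw [scatteringCoeff_one] at h
  convert h using 2 with s
  · simp only [scatteringCoeff, div_eq_mul_inv, mul_inv]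
    ring
  · have hlog4π : Real.log (4 * π) = 2 * Real.log 2 + Real.log π := by
      rw [Real.log_mul (by norm_num) Real.pi_ne_zero, show (4 : ℝ) = 2 ^ 2 by norm_num,
        Real.log_pow, Nat.cast_ofNat]
    have hlog2π : Real.log (2 * π) = Real.log 2 + Real.log π :=
      Real.log_mul two_ne_zero Real.pi_ne_zero
    rw [deriv_riemannZeta_neg_one, riemannZeta_neg_one, hlog4π, hlog2π, ← ofNat_log]
    push_cast
    field_simp
    ring
end

section
/- lim_{s→1} ( (1/2^s) · √π · Γ(s−1/2)/Γ(s) · 1/(2^{2s}−1) · ζ(2s−1)/ζ(2s) − 1/(2π(s−1)) ) = (1/π)·( ζ'(−1)/ζ(−1) − log(4π) + 1 − (11/6)·log 2 ). -/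
/-!
Writing `ζ = Λ / Γℝ` and using `Γℝ(2s) / Γℝ(2s - 1) = Γ(s) / (√π Γ(s - 1/2))`, the expression is
`H(s) Λ(2s - 1)` with `H(s) = (2^s (2^{2s} - 1) Λ(2s))⁻¹` holomorphic at `1` and `H(1) = 1/π`.
By the functional equation and `Λ = Λ₀ - 1/s - 1/(1 - s)`, the only singular part of `Λ(2s - 1)`
at `s = 1` is `1 / (2(s - 1))`, so the limit is `H(1) (Λ₀(0) - 1) + H'(1) / 2`.
Everything is then expressed through logarithmic derivatives: `H'/H (1)` involves `Λ'/Λ (2)`, and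
so does `ζ'/ζ (-1) = Λ'/Λ (-1) - Γℝ'/Γℝ (-1)` since `Λ'/Λ (1 - s) = -Λ'/Λ (s)`; the Gamma factor
contributes the digamma value `ψ(-1/2) = 2 - 2 log 2 - γ`.
-/

open Complex Filter
open scoped Real Topology

theorem HasDerivAt.tendsto_mul_add_div_sub_sub {𝕜 : Type*} [NontriviallyNormedField 𝕜]
    {H g : 𝕜 → 𝕜} {H' a : 𝕜} (hH : HasDerivAt H H' a) (hg : ContinuousAt g a) (c : 𝕜) :
    Tendsto (fun s => H s * (g s + c / (s - a)) - H a * c / (s - a)) (𝓝[≠] a)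
      (𝓝 (H a * g a + c * H')) := by
  have hslope := (hasDerivAt_iff_tendsto_slope.mp hH).const_mul c
  refine (((hH.continuousAt.mul hg).tendsto.mono_left nhdsWithin_le_nhds).add hslope).congr
    fun s => ?_
  simp only [Pi.mul_apply, slope_def_field]
  ring

namespace Complex

lemma Gammaℝ_two : Gammaℝ 2 = (π : ℂ)⁻¹ := by
  rw [Gammaℝ_def, show (-2 / 2 : ℂ) = -1 by norm_num, div_self two_ne_zero, Gamma_one,
    cpow_neg_one, mul_one]

lemma neg_one_half_ne_neg_natCast (m : ℕ) : (-1 / 2 : ℂ) ≠ -m := by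
  intro h
  have h2 : ((m * 2 : ℕ) : ℂ) = 1 := by push_cast; linear_combination 2 * h
  have : m * 2 = 1 := by exact_mod_cast h2
  omega

lemma digamma_neg_one_half :
    digamma (-1 / 2) = 2 - 2 * log 2 - Real.eulerMascheroniConstant := by
  have h := digamma_apply_add_one (-1 / 2) neg_one_half_ne_neg_natCast
  rw [show (-1 / 2 + 1 : ℂ) = 1 / 2 by ring, digamma_one_half] at h
  linear_combination -h

lemma differentiableAt_Gammaℝ {s : ℂ} (hs : ∀ m : ℕ, s / 2 ≠ -m) :
    DifferentiableAt ℂ Gammaℝ s := by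
  rw [show Gammaℝ = fun s => (π : ℂ) ^ (-s / 2) * Gamma (s / 2) from funext Gammaℝ_def]
  exact ((differentiableAt_id.neg.div_const 2).const_cpow
    (.inl (ofReal_ne_zero.2 Real.pi_ne_zero))).mul
    ((differentiableAt_Gamma _ hs).comp s (differentiableAt_id.div_const 2))

lemma logDeriv_Gammaℝ {s : ℂ} (hs : ∀ m : ℕ, s / 2 ≠ -m) :
    logDeriv Gammaℝ s = -log π / 2 + digamma (s / 2) / 2 := by
  have hπ : (π : ℂ) ≠ 0 := ofReal_ne_zero.2 Real.pi_ne_zero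
  have hdiv : HasDerivAt (fun s : ℂ => s / 2) (1 / 2) s := by
    simpa using (hasDerivAt_id s).div_const 2
  have hpow : HasDerivAt (fun s : ℂ => (π : ℂ) ^ (-s / 2))
      ((π : ℂ) ^ (-s / 2) * log π * (-1 / 2)) s := by
    simpa [neg_div] using (((hasDerivAt_id s).neg).div_const 2).const_cpow (c := (π : ℂ)) (.inl hπ)
  have hΓ : DifferentiableAt ℂ (fun s : ℂ => Gamma (s / 2)) s :=
    (differentiableAt_Gamma _ hs).comp s hdiv.differentiableAt
  rw [show Gammaℝ = fun s => (π : ℂ) ^ (-s / 2) * Gamma (s / 2) from funext Gammaℝ_def,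
    logDeriv_mul (f := fun s : ℂ => (π : ℂ) ^ (-s / 2)) (g := fun s : ℂ => Gamma (s / 2))
      s (cpow_ne_zero_iff.2 (.inl hπ)) (Gamma_ne_zero hs) hpow.differentiableAt hΓ,
    show (fun s : ℂ => Gamma (s / 2)) = Gamma ∘ (fun s : ℂ => s / 2) from rfl,
    logDeriv_comp (g := fun s : ℂ => s / 2) (differentiableAt_Gamma _ hs) hdiv.differentiableAt,
    hdiv.deriv, logDeriv_apply, hpow.deriv, ← digamma_def]
  field_simp [cpow_ne_zero_iff.2 (Or.inl hπ)]

lemma log_four_mul_pi : log (4 * π) = 2 * log 2 + log π := by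
  rw [show (4 * π : ℂ) = ((2 ^ 2 * π : ℝ) : ℂ) by push_cast; ring, ← ofReal_log (by positivity),
    Real.log_mul (by norm_num) Real.pi_ne_zero, Real.log_pow, ofReal_add, ofReal_mul,
    ofReal_log zero_le_two, ofReal_log Real.pi_pos.le]
  push_cast
  ring

lemma logDeriv_Gammaℝ_neg_one :
    logDeriv Gammaℝ (-1) = 1 - (Real.eulerMascheroniConstant + log (4 * π)) / 2 := by
  rw [logDeriv_Gammaℝ neg_one_half_ne_neg_natCast, digamma_neg_one_half, log_four_mul_pi]
  ring

end Complex

lemma completedRiemannZeta_two : completedRiemannZeta 2 = π / 6 := by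
  have h := riemannZeta_def_of_ne_zero (two_ne_zero (α := ℂ))
  rw [riemannZeta_two, Gammaℝ_two, div_inv_eq_mul] at h
  have hπ : (π : ℂ) ≠ 0 := ofReal_ne_zero.2 Real.pi_ne_zero
  field_simp at h
  linear_combination -h / 6

lemma completedRiemannZeta_neg_one : completedRiemannZeta (-1) = π / 6 := by
  rw [← completedRiemannZeta_two, ← completedRiemannZeta_one_sub]
  norm_num

lemma logDeriv_completedRiemannZeta_one_sub (s : ℂ) :
    logDeriv completedRiemannZeta (1 - s) = -logDeriv completedRiemannZeta s := by
  have hderiv : deriv completedRiemannZeta s = -deriv completedRiemannZeta (1 - s) := by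
    conv_lhs => rw [← funext completedRiemannZeta_one_sub]
    exact deriv_comp_const_sub completedRiemannZeta 1 s
  rw [logDeriv_apply, logDeriv_apply, completedRiemannZeta_one_sub, hderiv, neg_div, neg_neg]

lemma logDeriv_riemannZeta {s : ℂ} (hs : ∀ m : ℕ, s / 2 ≠ -m) (hs₁ : s ≠ 1)
    (hΛ : completedRiemannZeta s ≠ 0) :
    logDeriv riemannZeta s = logDeriv completedRiemannZeta s - logDeriv Gammaℝ s := by
  have hs₀ : s ≠ 0 := fun h => hs 0 (by simp [h])
  have hζ : riemannZeta =ᶠ[𝓝 s] fun s => completedRiemannZeta s / Gammaℝ s := by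
    filter_upwards [isOpen_ne.mem_nhds hs₀] with t ht using riemannZeta_def_of_ne_zero ht
  rw [(logDeriv_congr_nhds hζ).eq_of_nhds, logDeriv_div s hΛ (Gammaℝ_eq_zero_iff.not.2 ?_)
    (differentiableAt_completedZeta hs₀ hs₁) (differentiableAt_Gammaℝ hs)]
  rintro ⟨n, rfl⟩
  exact hs n (by ring)

lemma logDeriv_riemannZeta_neg_one :
    logDeriv riemannZeta (-1) =
      (Real.eulerMascheroniConstant + log (4 * π)) / 2 - 1 - logDeriv completedRiemannZeta 2 := by
  have hΛ : completedRiemannZeta (-1) ≠ 0 := by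
    rw [completedRiemannZeta_neg_one]
    exact div_ne_zero (ofReal_ne_zero.2 Real.pi_ne_zero) (by norm_num)
  rw [logDeriv_riemannZeta neg_one_half_ne_neg_natCast (by norm_num) hΛ,
    logDeriv_Gammaℝ_neg_one, show (-1 : ℂ) = 1 - 2 by norm_num,
    logDeriv_completedRiemannZeta_one_sub]
  ring

lemma completedRiemannZeta_two_mul_sub_one (s : ℂ) :
    completedRiemannZeta (2 * s - 1) =
      completedRiemannZeta₀ (2 - 2 * s) - 1 / (2 * s - 1) + 1 / 2 / (s - 1) := by
  rw [← completedRiemannZeta_one_sub, completedRiemannZeta_eq,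
    show 1 - (2 * s - 1) = (s - 1) * (-2) by ring, show 1 - (s - 1) * (-2) = 2 * s - 1 by ring,
    one_div (_ * _), mul_inv, show (s - 1) * (-2) = 2 - 2 * s by ring]
  ring

noncomputable def scatteringPrefactor (s : ℂ) : ℂ :=
  ((2 : ℂ) ^ s * ((2 : ℂ) ^ (2 * s) - 1) * completedRiemannZeta (2 * s))⁻¹

lemma two_cpow_two : (2 : ℂ) ^ (2 : ℂ) = 4 := by
  rw [show (2 : ℂ) = (2 : ℕ) by norm_num, cpow_natCast]
  norm_num

lemma scatteringPrefactor_one : scatteringPrefactor 1 = (π : ℂ)⁻¹ := by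
  rw [scatteringPrefactor, mul_one, cpow_one, two_cpow_two, completedRiemannZeta_two]
  ring

lemma hasDerivAt_scatteringPrefactor_one :
    HasDerivAt scatteringPrefactor
      (-(11 / 3 * log 2 + 2 * logDeriv completedRiemannZeta 2) / π) 1 := by
  have hπ : (π : ℂ) ≠ 0 := ofReal_ne_zero.2 Real.pi_ne_zero
  have hmul : HasDerivAt (fun s : ℂ => 2 * s) 2 1 := by
    simpa using (hasDerivAt_id (1 : ℂ)).const_mul (2 : ℂ)
  have hpow : HasDerivAt (fun s : ℂ => (2 : ℂ) ^ s) (2 * log 2) 1 := by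
    simpa using (hasDerivAt_id (1 : ℂ)).const_cpow (c := 2) (.inl two_ne_zero)
  have hpow' : HasDerivAt (fun s : ℂ => (2 : ℂ) ^ (2 * s) - 1) (8 * log 2) 1 := by
    refine ((hmul.const_cpow (c := 2) (.inl two_ne_zero)).sub_const 1).congr_deriv ?_
    rw [mul_one, two_cpow_two]
    ring
  have hΛ : HasDerivAt (fun s : ℂ => completedRiemannZeta (2 * s))
      (deriv completedRiemannZeta 2 * 2) 1 := by
    have hd : HasDerivAt completedRiemannZeta (deriv completedRiemannZeta 2) (2 * 1) := by
      rw [mul_one]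
      exact (differentiableAt_completedZeta (by norm_num) (by norm_num)).hasDerivAt
    exact hd.comp 1 hmul
  have hD₁ : (2 : ℂ) ^ (1 : ℂ) * ((2 : ℂ) ^ (2 * 1 : ℂ) - 1) * completedRiemannZeta (2 * 1) =
      π := by
    rw [mul_one, cpow_one, two_cpow_two, completedRiemannZeta_two]
    ring
  refine (((hpow.mul hpow').mul hΛ).inv ?_).congr_deriv ?_ <;> simp only [Pi.mul_apply, hD₁]
  · exact hπ
  · rw [mul_one, cpow_one, two_cpow_two, logDeriv_apply, completedRiemannZeta_two]
    field_simp
    ring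

noncomputable def gammaTwoScatteringDiag (s : ℂ) : ℂ :=
  (1 / (2 : ℂ) ^ s) * (√π : ℂ) * (Gamma (s - 1 / 2) / Gamma s) * (1 / ((2 : ℂ) ^ (2 * s) - 1)) *
    (riemannZeta (2 * s - 1) / riemannZeta (2 * s))

lemma gammaTwoScatteringDiag_eq {s : ℂ} (hs : 1 / 2 < s.re) :
    gammaTwoScatteringDiag s = scatteringPrefactor s * completedRiemannZeta (2 * s - 1) := by
  have hπ : (π : ℂ) ≠ 0 := ofReal_ne_zero.2 Real.pi_ne_zero
  have hπs : (π : ℂ) ^ (-s) ≠ 0 := cpow_ne_zero_iff.2 (.inl hπ)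
  have hsqrtπ : (√π : ℂ) ≠ 0 := ofReal_ne_zero.2 (Real.sqrt_ne_zero'.2 Real.pi_pos)
  have hΓ : Gamma s ≠ 0 := Gamma_ne_zero_of_re_pos (by linarith)
  have hΓ' : Gamma (s - 1 / 2) ≠ 0 := Gamma_ne_zero_of_re_pos (by simpa using hs)
  have hs₀ : 2 * s ≠ 0 := fun h => by norm_num [show s = 0 by simpa using h] at hs
  have hs₁ : 2 * s - 1 ≠ 0 := fun h => by
    simp [show s = 1 / 2 by linear_combination h / 2] at hs
  have hΓℝ : Gammaℝ (2 * s) = (π : ℂ) ^ (-s) * Gamma s := by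
    rw [Gammaℝ_def, show -(2 * s) / 2 = -s by ring, mul_div_cancel_left₀ s two_ne_zero]
  have hΓℝ' : Gammaℝ (2 * s - 1) = √π * ((π : ℂ) ^ (-s) * Gamma (s - 1 / 2)) := by
    rw [Gammaℝ_def, show -(2 * s - 1) / 2 = 1 / 2 + -s by ring,
      show (2 * s - 1) / 2 = s - 1 / 2 by ring, cpow_add _ _ hπ, Real.sqrt_eq_rpow,
      ofReal_cpow Real.pi_nonneg]
    push_cast
    ring
  rw [gammaTwoScatteringDiag, scatteringPrefactor, riemannZeta_def_of_ne_zero hs₀,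
    riemannZeta_def_of_ne_zero hs₁, hΓℝ, hΓℝ']
  field_simp
  rw [show (s * 2 - 1) / 2 = s - 1 / 2 by ring, mul_assoc, mul_div_mul_left _ _ hΓ']

/-- **Diagonal scattering constant of Γ(2).**
`lim_{s→1} ( (1/2^s)·√π·Γ(s−1/2)/Γ(s) · 1/(2^{2s}−1) · ζ(2s−1)/ζ(2s) − 1/(2π(s−1)) )
  = (1/π)·( ζ'(−1)/ζ(−1) − log(4π) + 1 − (11/6)·log 2 )`. -/
theorem gamma_two_scattering_diag :
    Tendsto (fun s : ℂ =>
        (1 / (2 : ℂ) ^ s) * (Real.sqrt Real.pi : ℂ) *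
          (Complex.Gamma (s - 1 / 2) / Complex.Gamma s) *
          (1 / ((2 : ℂ) ^ (2 * s) - 1)) *
          (riemannZeta (2 * s - 1) / riemannZeta (2 * s)) -
        1 / (2 * (Real.pi : ℂ) * (s - 1)))
      (nhdsWithin 1 {(1 : ℂ)}ᶜ)
      (nhds ((1 / (Real.pi : ℂ)) *
        (deriv riemannZeta (-1) / riemannZeta (-1) - (Real.log (4 * Real.pi) : ℂ) + 1 -
          (11 / 6) * (Real.log 2 : ℂ)))) := by
  have hg : ContinuousAt (fun s : ℂ => completedRiemannZeta₀ (2 - 2 * s) - 1 / (2 * s - 1)) 1 :=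
    (differentiable_completedZeta₀.continuous.comp (by fun_prop)).continuousAt.sub
      (continuousAt_const.div (by fun_prop) (by norm_num))
  have hlim := hasDerivAt_scatteringPrefactor_one.tendsto_mul_add_div_sub_sub hg (1 / 2)
  have hre : ∀ᶠ s : ℂ in 𝓝[≠] 1, 1 / 2 < s.re := nhdsWithin_le_nhds <|
    continuous_re.continuousAt.eventually (lt_mem_nhds (by norm_num : (1 / 2 : ℝ) < (1 : ℂ).re))
  have hvalue : scatteringPrefactor 1 * (completedRiemannZeta₀ (2 - 2 * 1) - 1 / (2 * 1 - 1)) +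
      1 / 2 * (-(11 / 3 * log 2 + 2 * logDeriv completedRiemannZeta 2) / π) =
      1 / (π : ℂ) * (deriv riemannZeta (-1) / riemannZeta (-1) - (Real.log (4 * π) : ℂ) + 1 -
        11 / 6 * (Real.log 2 : ℂ)) := by
    rw [← logDeriv_apply, logDeriv_riemannZeta_neg_one, scatteringPrefactor_one,
      show (2 - 2 * 1 : ℂ) = 0 by ring, completedRiemannZeta₀_zero, ofReal_log (by positivity),
      ofReal_log zero_le_two]
    push_cast
    ring
  rw [← hvalue]
  refine hlim.congr' ?_
  filter_upwards [hre] with s hs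
  change _ = gammaTwoScatteringDiag s - _
  rw [gammaTwoScatteringDiag_eq hs, completedRiemannZeta_two_mul_sub_one, scatteringPrefactor_one,
    one_div (_ * _), mul_inv]
  ring
end
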